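/- For every positive integer d and every positive integer t, |G_{d,t,L}| ≤ ⌊(d−1)/t⌋ · |B_{d,L}|. -/

import Mathlib

open Polynomial

noncomputable section

/-- The orbit of `j : ZMod N` under multiplication by `q`. -/
def qOrbit (N q : ℕ) (j : ZMod N) : Set (ZMod N) :=
  Set.range fun k : ℕ => (q : ZMod N) ^ k * j

/-- The set `L` of orbits of `ZMod N` under multiplication by `q`. -/
def orbitSet (N q : ℕ) : Set (Set (ZMod N)) :=
  {l | ∃ j : ZMod N, l = qOrbit N q j}

/-- `β ^ j` for a residue class `j`. -/
def bpow {E : Type*} [Monoid E] {N : ℕ} (β : E) (j : ZMod N) : E :=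
  β ^ j.val

/-- The check-matrix entry `h_{i l} = ∑_{j ∈ l} ρ(β^j) β^{i j}`, as an element of `E`. -/
def hEntry {F E : Type*} [CommSemiring F] [CommSemiring E] [Algebra F E] {N : ℕ}
    (β : E) (ρ : Polynomial F) (i : ℕ) (l : Set (ZMod N)) : E :=
  ∑ᶠ j ∈ l, Polynomial.aeval (bpow β j) ρ * bpow β j ^ i

/-- The code `C(ρ, t)` inside `F^L`. -/
def codeSet (F E : Type*) [Field F] [Field E] [Algebra F E] (N q : ℕ)
    (β : E) (ρ : Polynomial F) (t : ℕ) : Set (↥(orbitSet N q) → F) :=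
  {c | ∀ i < t, ∑ᶠ l : orbitSet N q,
    algebraMap F E (c l) * hEntry β ρ i (l : Set (ZMod N)) = 0}

open scoped Classical in
/-- `deg c = ∑_{l : c_l ≠ 0} |l|`. -/
def wdeg {F : Type*} [Zero F] {N q : ℕ} (c : ↥(orbitSet N q) → F) : ℕ :=
  ∑ᶠ l : orbitSet N q, if c l ≠ 0 then (l : Set (ZMod N)).ncard else 0

/-- The set `B_{d,L}` of words of degree `d`. -/
def Bset (F : Type*) [Field F] (N q d : ℕ) : Set (↥(orbitSet N q) → F) :=
  {r | wdeg r = d}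

/-- The set `G_{d,t,L}` of monic irreducible polynomials `g` of degree `t` over `F` having
no roots in `E` such that `C(g⁻¹, t)` contains a word of `B_{d,L}`. -/
def Gset (F E : Type*) [Field F] [Field E] [Algebra F E] (N q : ℕ) (β : E)
    (d t : ℕ) : Set (Polynomial F) :=
  {g | g.Monic ∧ Irreducible g ∧ g.natDegree = t ∧
    (∀ x : E, Polynomial.aeval x g ≠ 0) ∧
    ∃ ginv : Polynomial F, ginv.degree < (N : WithBot ℕ) ∧
      ((X : Polynomial F) ^ N - 1 ∣ g * ginv - 1) ∧
      ∃ r ∈ Bset F N q d, r ∈ codeSet F E N q β ginv t}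

/-!
Unfolding a word `c ∈ F^L` along the orbits gives a word `u` on `ZMod N` of weight `deg c`, and
`c ∈ C(g⁻¹, t)` says that `∑ⱼ uⱼ g(βʲ)⁻¹ (βʲ)ⁱ = 0` for `i < t`. These power-sum identities make `g`
divide the error evaluator `∑ⱼ uⱼ ∏_{k ≠ j} (X - βᵏ)`, a nonzero polynomial of degree `< deg c`.
Distinct monic irreducible polynomials are coprime, so at most `⌊(d - 1)/t⌋` of them of degree `t`
divide it; summing over the words of `B_{d,L}` gives the bound.
-/

open Finset Lagrange

section Orbits

variable {N q : ℕ}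

def orbitOf (N q : ℕ) (j : ZMod N) : orbitSet N q :=
  ⟨qOrbit N q j, j, rfl⟩

theorem mem_qOrbit_self (j : ZMod N) : j ∈ qOrbit N q j :=
  ⟨0, by simp⟩

theorem qOrbit_eq_of_mem (hq : IsOfFinOrder (q : ZMod N)) {j j' : ZMod N}
    (h : j' ∈ qOrbit N q j) : qOrbit N q j' = qOrbit N q j := by
  obtain ⟨n, hn, hqn⟩ := isOfFinOrder_iff_pow_eq_one.mp hq
  obtain ⟨k, rfl⟩ := h
  have hinv : (q : ZMod N) ^ (k * (n - 1)) * (q : ZMod N) ^ k = 1 := by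
    rw [← pow_add, ← mul_add_one, Nat.sub_one_add_one hn.ne', pow_mul', hqn, one_pow]
  ext x
  constructor
  · rintro ⟨i, rfl⟩
    exact ⟨i + k, by simp only [pow_add, mul_assoc]⟩
  · rintro ⟨i, rfl⟩
    refine ⟨i + k * (n - 1), ?_⟩
    dsimp only
    rw [pow_add, mul_assoc, ← mul_assoc (_ ^ (k * (n - 1))), hinv, one_mul]

theorem orbitOf_eq_iff_mem (hq : IsOfFinOrder (q : ZMod N)) {l : orbitSet N q} {j : ZMod N} :
    orbitOf N q j = l ↔ j ∈ (l : Set (ZMod N)) := by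
  obtain ⟨_, j₀, rfl⟩ := l
  constructor
  · intro h
    rw [← h]
    exact mem_qOrbit_self j
  · exact fun hj => Subtype.ext (qOrbit_eq_of_mem hq hj)

theorem finsum_orbitSet_finsum_mem [NeZero N] {M : Type*} [AddCommMonoid M]
    (hq : IsOfFinOrder (q : ZMod N)) (f : orbitSet N q → ZMod N → M) :
    ∑ᶠ l : orbitSet N q, ∑ᶠ j ∈ (l : Set (ZMod N)), f l j = ∑ j, f (orbitOf N q j) j := by
  classical
  have := Fintype.ofFinite (orbitSet N q)
  rw [finsum_eq_sum_of_fintype, ← sum_fiberwise univ (orbitOf N q)]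
  refine sum_congr rfl fun l _ => ?_
  rw [finsum_mem_eq_toFinset_sum]
  refine (sum_congr ?_ fun j hj => ?_).symm
  · ext j
    simp [orbitOf_eq_iff_mem hq]
  · rw [(orbitOf_eq_iff_mem hq).mpr (by simpa using hj)]

open scoped Classical in
theorem wdeg_eq_card_filter [NeZero N] {F : Type*} [Zero F] (hq : IsOfFinOrder (q : ZMod N))
    (c : orbitSet N q → F) : wdeg c = #{j | c (orbitOf N q j) ≠ 0} := by
  have hcard (l : orbitSet N q) : (if c l ≠ 0 then (l : Set (ZMod N)).ncard else 0) =
      ∑ᶠ j ∈ (l : Set (ZMod N)), if c l ≠ 0 then 1 else 0 := by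
    split_ifs
    · rw [finsum_mem_eq_toFinset_sum, ← card_eq_sum_ones, Set.ncard_eq_toFinset_card']
    · simp
  rw [wdeg]
  simp_rw [hcard, finsum_orbitSet_finsum_mem hq, card_filter]

theorem mem_codeSet_iff [NeZero N] {F E : Type*} [Field F] [Field E] [Algebra F E]
    (hq : IsOfFinOrder (q : ZMod N)) {β : E} {ρ : F[X]} {t : ℕ} {c : orbitSet N q → F} :
    c ∈ codeSet F E N q β ρ t ↔ ∀ i < t,
      ∑ j, algebraMap F E (c (orbitOf N q j)) * (aeval (bpow β j) ρ * bpow β j ^ i) = 0 := by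
  simp only [codeSet, Set.mem_ofPred_eq, hEntry, mul_finsum_mem, finsum_orbitSet_finsum_mem hq]

end Orbits

section ErrorEvaluator

variable {ι R : Type*}

def divDiff [CommRing R] (p : R[X]) (a : R) : R[X] :=
  ∑ s ∈ range (p.natDegree + 1), C (p.coeff s) * ∑ i ∈ range s, X ^ i * C a ^ (s - 1 - i)

theorem divDiff_mul_X_sub_C [CommRing R] (p : R[X]) (a : R) :
    divDiff p a * (X - C a) = p - C (p.eval a) := by
  conv_rhs => enter [1]; rw [p.as_sum_range_C_mul_X_pow]
  rw [divDiff, eval_eq_sum_range, sum_mul, map_sum, ← sum_sub_distrib]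
  refine sum_congr rfl fun s _ => ?_
  rw [mul_assoc, geom_sum₂_mul, mul_sub, C_mul, C_pow]

theorem sum_C_mul_divDiff_eq_zero [CommRing R] (p : R[X]) (S : Finset ι) (a w : ι → R)
    (hw : ∀ i < p.natDegree, ∑ j ∈ S, w j * a j ^ i = 0) :
    ∑ j ∈ S, C (w j) * divDiff p (a j) = 0 := by
  simp only [divDiff, mul_sum]
  rw [sum_comm]
  refine sum_eq_zero fun s hs => ?_
  rw [sum_comm]
  refine sum_eq_zero fun i hi => ?_
  have hdeg : s - 1 - i < p.natDegree := by
    simp only [mem_range] at hs hi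
    omega
  calc ∑ j ∈ S, C (w j) * (C (p.coeff s) * (X ^ i * C (a j) ^ (s - 1 - i)))
      = C (p.coeff s) * X ^ i * C (∑ j ∈ S, w j * a j ^ (s - 1 - i)) := by
        simp only [map_sum, mul_sum, map_mul, map_pow]
        exact sum_congr rfl fun j _ => by ring
    _ = 0 := by rw [hw _ hdeg, map_zero, mul_zero]

variable [DecidableEq ι]

def errorEvaluator [CommRing R] (S : Finset ι) (a u : ι → R) : R[X] :=
  ∑ j ∈ S, C (u j) * nodal (S.erase j) a

theorem natDegree_errorEvaluator_le [Field R] (S : Finset ι) (a u : ι → R) :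
    (errorEvaluator S a u).natDegree ≤ #S - 1 :=
  natDegree_sum_le_of_forall_le _ _ fun j hj =>
    (natDegree_C_mul_le _ _).trans (by rw [natDegree_nodal, card_erase_of_mem hj])

theorem eval_errorEvaluator [CommRing R] {S : Finset ι} (a u : ι → R) {j : ι} (hj : j ∈ S) :
    (errorEvaluator S a u).eval (a j) = u j * (nodal (S.erase j) a).eval (a j) := by
  rw [errorEvaluator, eval_finsetSum, sum_eq_single_of_mem j hj fun k _ hkj => ?_]
  · rw [eval_mul, eval_C]
  · rw [eval_mul, eval_nodal_at_node (mem_erase.mpr ⟨hkj.symm, hj⟩), mul_zero]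

theorem errorEvaluator_ne_zero [Field R] {S : Finset ι} {a : ι → R} (u : ι → R)
    (ha : Set.InjOn a S) {j : ι} (hj : j ∈ S) (hu : u j ≠ 0) : errorEvaluator S a u ≠ 0 := by
  intro h
  have heval := eval_errorEvaluator a u hj
  rw [h, eval_zero] at heval
  refine mul_ne_zero hu (eval_nodal_not_at_node fun k hk hjk => ?_) heval.symm
  exact (mem_erase.mp hk).1 (ha (mem_of_mem_erase hk) hj hjk.symm)

theorem dvd_errorEvaluator [CommRing R] (p : R[X]) (S : Finset ι) (a u w : ι → R)
    (hu : ∀ j ∈ S, w j * p.eval (a j) = u j)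
    (hw : ∀ i < p.natDegree, ∑ j ∈ S, w j * a j ^ i = 0) :
    p ∣ errorEvaluator S a u := by
  have hterm : ∀ j ∈ S, C (w j) * nodal (S.erase j) a * p - C (u j) * nodal (S.erase j) a =
      nodal S a * (C (w j) * divDiff p (a j)) := by
    intro j hj
    rw [nodal_eq_mul_nodal_erase hj, ← hu j hj, C_mul]
    linear_combination (-C (w j) * nodal (S.erase j) a) * divDiff_mul_X_sub_C p (a j)
  refine ⟨∑ j ∈ S, C (w j) * nodal (S.erase j) a, (sub_eq_zero.mp ?_).symm⟩
  calc p * ∑ j ∈ S, C (w j) * nodal (S.erase j) a - errorEvaluator S a u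
      = ∑ j ∈ S, (C (w j) * nodal (S.erase j) a * p - C (u j) * nodal (S.erase j) a) := by
        rw [errorEvaluator, mul_sum, ← sum_sub_distrib]
        exact sum_congr rfl fun j _ => by ring
    _ = 0 := by
        rw [sum_congr rfl hterm, ← mul_sum, sum_C_mul_divDiff_eq_zero p S a w hw, mul_zero]

end ErrorEvaluator

theorem sum_natDegree_le_of_forall_map_dvd {F K : Type*} [Field F] [Field K] (f : F →+* K)
    {s : Finset F[X]} (hs : ∀ g ∈ s, g.Monic ∧ Irreducible g) {P : K[X]} (hP : P ≠ 0)
    (hdvd : ∀ g ∈ s, g.map f ∣ P) : ∑ g ∈ s, g.natDegree ≤ P.natDegree := by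
  have hcop : (s : Set F[X]).Pairwise (Function.onFun IsCoprime fun g => g.map f) := by
    intro g hg g' hg' hne
    refine IsCoprime.map ((hs g hg).2.coprime_iff_not_dvd.mpr fun hdvd => hne ?_) (mapRingHom f)
    exact eq_of_monic_of_associated (hs g hg).1 (hs g' hg').1
      ((hs g hg).2.associated_of_dvd (hs g' hg').2 hdvd)
  calc ∑ g ∈ s, g.natDegree = (∏ g ∈ s, g.map f).natDegree := by
        rw [natDegree_prod_of_monic _ _ fun g hg => (hs g hg).1.map f]
        exact sum_congr rfl fun g hg => ((hs g hg).1.natDegree_map f).symm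
    _ ≤ P.natDegree := natDegree_le_of_dvd (prod_dvd_of_coprime hcop hdvd) hP

section Code

variable {F E : Type*} [Field F] [Field E] [Algebra F E] {N q t : ℕ}

theorem aeval_mul_aeval_eq_one_of_dvd {A : Type*} [CommRing A] [Algebra F A] {g ginv : F[X]}
    (h : (X : F[X]) ^ N - 1 ∣ g * ginv - 1) {x : A} (hx : x ^ N = 1) :
    aeval x g * aeval x ginv = 1 := by
  obtain ⟨k, hk⟩ := h
  have hx' := congrArg (aeval x) hk
  simp only [map_sub, map_mul, map_pow, aeval_X, map_one, hx, sub_self, zero_mul] at hx'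
  exact sub_eq_zero.mp hx'

theorem bpow_pow_eq_one {M : Type*} [Monoid M] {β : M} (hβ : β ^ N = 1) (j : ZMod N) :
    bpow β j ^ N = 1 := by
  rw [bpow, ← pow_mul, mul_comm, pow_mul, hβ, one_pow]

theorem bpow_injective [NeZero N] {M : Type*} [Monoid M] {β : M} (hβ : orderOf β = N) :
    Function.Injective (bpow β : ZMod N → M) := fun j k h =>
  ZMod.val_injective N <| pow_injOn_Iio_orderOf (hβ ▸ ZMod.val_lt j) (hβ ▸ ZMod.val_lt k) h

open scoped Classical in
theorem map_dvd_errorEvaluator_of_mem_codeSet [NeZero N] (hq : IsOfFinOrder (q : ZMod N))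
    {β : E} (hβ : β ^ N = 1) {g ginv : F[X]} (hg : g.natDegree ≤ t)
    (hinv : (X : F[X]) ^ N - 1 ∣ g * ginv - 1) {c : orbitSet N q → F}
    (hc : c ∈ codeSet F E N q β ginv t) :
    g.map (algebraMap F E) ∣ errorEvaluator {j | c (orbitOf N q j) ≠ 0} (bpow β)
      (fun j => algebraMap F E (c (orbitOf N q j))) := by
  refine dvd_errorEvaluator _ _ _ _
    (fun j => algebraMap F E (c (orbitOf N q j)) * aeval (bpow β j) ginv)
    (fun j _ => ?_) fun i hi => ?_
  · rw [eval_map_algebraMap, mul_assoc, mul_comm (aeval _ ginv),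
      aeval_mul_aeval_eq_one_of_dvd hinv (bpow_pow_eq_one hβ j), mul_one]
  · rw [sum_filter_of_ne (p := fun j => c (orbitOf N q j) ≠ 0) fun j _ hj hc0 =>
      hj (by rw [hc0, map_zero, zero_mul, zero_mul])]
    simpa only [mul_assoc] using
      (mem_codeSet_iff hq).mp hc i (hi.trans_le (natDegree_map_le.trans hg))

theorem card_mul_le_wdeg_sub_one [NeZero N] (hq : IsOfFinOrder (q : ZMod N)) {β : E}
    (hβ : orderOf β = N) {c : orbitSet N q → F} (hc : 0 < wdeg c) {s : Finset F[X]}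
    (hs : ∀ g ∈ s, g.Monic ∧ Irreducible g ∧ g.natDegree = t ∧
      ∃ ginv : F[X], ((X : F[X]) ^ N - 1 ∣ g * ginv - 1) ∧ c ∈ codeSet F E N q β ginv t) :
    #s * t ≤ wdeg c - 1 := by
  classical
  set S : Finset (ZMod N) := {j | c (orbitOf N q j) ≠ 0}
  obtain ⟨j, hj⟩ : S.Nonempty := card_pos.mp (wdeg_eq_card_filter hq c ▸ hc)
  have hne : errorEvaluator S (bpow β) (fun j => algebraMap F E (c (orbitOf N q j))) ≠ 0 :=
    errorEvaluator_ne_zero _ (bpow_injective hβ).injOn hj (by simpa using (mem_filter.mp hj).2)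
  calc #s * t = ∑ g ∈ s, g.natDegree := by
        rw [sum_congr rfl fun g hg => (hs g hg).2.2.1, sum_const, smul_eq_mul]
    _ ≤ (errorEvaluator S (bpow β) fun j => algebraMap F E (c (orbitOf N q j))).natDegree := by
        refine sum_natDegree_le_of_forall_map_dvd (algebraMap F E)
          (fun g hg => ⟨(hs g hg).1, (hs g hg).2.1⟩) hne fun g hg => ?_
        obtain ⟨-, -, hdeg, ginv, hinv, hcode⟩ := hs g hg
        exact map_dvd_errorEvaluator_of_mem_codeSet hq (hβ ▸ pow_orderOf_eq_one β) hdeg.le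
          hinv hcode
    _ ≤ #S - 1 := natDegree_errorEvaluator_le _ _ _
    _ = wdeg c - 1 := by rw [wdeg_eq_card_filter hq]

end Code

theorem card_Gset_le_general (q m : ℕ) (hm : 0 < m)
    (F E : Type*) [Field F] [Field E] [Fintype F] [Algebra F E]
    (hF : Fintype.card F = q)
    (β : E) (hβ : orderOf β = q ^ m - 1) (d t : ℕ) (hd : 0 < d) (ht : 0 < t) :
    (Gset F E (q ^ m - 1) q β d t).ncard ≤
      ((d - 1) / t) * (Bset F (q ^ m - 1) q d).ncard := by
  classical
  set N := q ^ m - 1 with hN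
  have hqm : 1 < q ^ m := Nat.one_lt_pow hm.ne' (hF ▸ Fintype.one_lt_card)
  have : NeZero N := ⟨by omega⟩
  have hq : IsOfFinOrder (q : ZMod N) := isOfFinOrder_iff_pow_eq_one.mpr ⟨m, hm, by
    rw [← Nat.cast_pow, ← Nat.sub_add_cancel hqm.le, Nat.cast_add, ← hN, ZMod.natCast_self,
      zero_add, Nat.cast_one]⟩
  obtain hG | hG := (Gset F E N q β d t).finite_or_infinite
  swap
  · rw [hG.ncard]
    exact Nat.zero_le _
  have hB := (Bset F N q d).toFinite
  let fiber (r : orbitSet N q → F) : Finset F[X] := hG.toFinset.filter fun g =>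
    ∃ ginv : F[X], ((X : F[X]) ^ N - 1 ∣ g * ginv - 1) ∧ r ∈ codeSet F E N q β ginv t
  calc (Gset F E N q β d t).ncard = #hG.toFinset := Set.ncard_eq_toFinset_card _ hG
    _ ≤ #(hB.toFinset.biUnion fiber) := card_le_card fun g hg => ?_
    _ ≤ #hB.toFinset * ((d - 1) / t) := card_biUnion_le_card_mul _ _ _ fun r hr => ?_
    _ = (d - 1) / t * (Bset F N q d).ncard := by rw [Set.ncard_eq_toFinset_card _ hB, mul_comm]
  · obtain ⟨-, -, -, -, ginv, -, hinv, r, hr, hc⟩ := hG.mem_toFinset.mp hg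
    exact mem_biUnion.mpr ⟨r, hB.mem_toFinset.mpr hr, mem_filter.mpr ⟨hg, ginv, hinv, hc⟩⟩
  · have hr : wdeg r = d := hB.mem_toFinset.mp hr
    refine (Nat.le_div_iff_mul_le ht).mpr (hr ▸ card_mul_le_wdeg_sub_one hq hβ (hr ▸ hd) ?_)
    intro g hg
    obtain ⟨hg, hcode⟩ := mem_filter.mp hg
    obtain ⟨hmon, hirr, hdeg, -⟩ := hG.mem_toFinset.mp hg
    exact ⟨hmon, hirr, hdeg, hcode⟩

/-- `|G_{d,t,L}| ≤ ⌊(d−1)/t⌋ · |B_{d,L}|`. -/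
theorem card_Gset_le (q m : ℕ) (hm : 0 < m) (hqm : Nat.Coprime q m)
    (F E : Type*) [Field F] [Field E] [Fintype F] [Fintype E] [Algebra F E]
    (hF : Fintype.card F = q) (hE : Fintype.card E = q ^ m)
    (β : E) (hβ : orderOf β = q ^ m - 1) (d t : ℕ) (hd : 0 < d) (ht : 0 < t) :
    (Gset F E (q ^ m - 1) q β d t).ncard ≤
      ((d - 1) / t) * (Bset F (q ^ m - 1) q d).ncard :=
  card_Gset_le_general q m hm F E hF β hβ d t hd ht
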